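/- If a modal formula A is provable in the pure logic of necessitation N, then A is provable in K (the smallest normal modal logic). Moreover, N is a proper subtheory of K: the distribution axiom □(p → q) → (□p → □q) is provable in K but not in N. -/
import Mathlib


/-- Modal formulas: propositional variables, ⊥, ∧, ∨, →, □.  Negation is defined. -/
inductive Formula : Type
  | var : ℕ → Formula
  | bot : Formula
  | and : Formula → Formula → Formula
  | or : Formula → Formula → Formula
  | imp : Formula → Formula → Formula
  | box : Formula → Formula
deriving DecidableEq

namespace Formula
/-- ¬A := A → ⊥ -/
def neg (A : Formula) : Formula := A.imp .bot
end Formula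

/-- `A` is a propositional tautology (in the modal language): it is true under every
assignment of truth values that respects the propositional connectives (variables and
boxed formulas are treated as atoms). -/
def IsTautology (A : Formula) : Prop :=
  ∀ v : Formula → Prop,
    (¬ v .bot) →
    (∀ B C, v (.and B C) ↔ (v B ∧ v C)) →
    (∀ B C, v (.or B C) ↔ (v B ∨ v C)) →
    (∀ B C, v (.imp B C) ↔ (v B → v C)) →
    v A

/-- Satisfaction in an N-model `(W, {≺_B}, ⊩)` with relations `R` and valuation `V`:
`x ⊩ □B` iff every `y` with `x ≺_B y` satisfies `B`. -/
def Sat {W : Type} (R : Formula → W → W → Prop) (V : W → ℕ → Prop) :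
    W → Formula → Prop
  | w, .var n => V w n
  | _, .bot => False
  | w, .and A B => Sat R V w A ∧ Sat R V w B
  | w, .or A B => Sat R V w A ∨ Sat R V w B
  | w, .imp A B => Sat R V w A → Sat R V w B
  | w, .box A => ∀ y, R A w y → Sat R V y A

/-- The set of subformulas Sub(A). -/
def subf : Formula → Finset Formula
  | .var n => {.var n}
  | .bot => {.bot}
  | .and A B => insert (.and A B) (subf A ∪ subf B)
  | .or A B => insert (.or A B) (subf A ∪ subf B)
  | .imp A B => insert (.imp A B) (subf A ∪ subf B)
  | .box A => insert (.box A) (subf A)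

/-- The pure logic of necessitation N. -/
inductive NProv : Formula → Prop
  | taut {A} : IsTautology A → NProv A
  | mp {A B} : NProv (A.imp B) → NProv A → NProv B
  | nec {A} : NProv A → NProv A.box

/-- The smallest normal modal logic K. -/
inductive KProv : Formula → Prop
  | taut {A} : IsTautology A → KProv A
  | dist (A B : Formula) : KProv (((A.imp B).box).imp ((A.box).imp B.box))
  | mp {A B} : KProv (A.imp B) → KProv A → KProv B
  | nec {A} : KProv A → KProv A.box

/-- The distribution axiom □(p → q) → (□p → □q). -/
def distAx : Formula :=
  (((Formula.var 0).imp (Formula.var 1)).box).imp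
    (((Formula.var 0).box).imp ((Formula.var 1).box))

lemma nsound {W : Type} (R : Formula → W → W → Prop) (V : W → ℕ → Prop)
    {A : Formula} (h : NProv A) : ∀ w, Sat R V w A := by
  induction h with
  | taut ht =>
    intro w
    exact ht (Sat R V w) (fun h => h) (fun B C => Iff.rfl) (fun B C => Iff.rfl)
      (fun B C => Iff.rfl)
  | mp _ _ ih1 ih2 => exact fun w => (ih1 w) (ih2 w)
  | nec _ ih => exact fun w y _ => ih y

/-- N is a proper subtheory of K: every N-theorem is a K-theorem, the distribution
axiom is provable in K but not in N. -/
theorem stmt12 :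
    (∀ A : Formula, NProv A → KProv A) ∧
    KProv distAx ∧ ¬ NProv distAx := by
  refine ⟨?_, KProv.dist _ _, ?_⟩
  · intro A h
    induction h with
    | taut ht => exact .taut ht
    | mp _ _ ih1 ih2 => exact .mp ih1 ih2
    | nec _ ih => exact .nec ih
  · intro h
    have := nsound (W := Unit) (fun A _ _ => A = .var 1) (fun _ _ => False) h ()
    simp only [distAx, Sat] at this
    exact this (fun y hy => absurd hy (by simp)) (fun y hy => absurd hy (by simp)) () trivial
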